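/- arXiv:1805.00599 — 3 statements merged into one kernel-verified Lean document; each statement's English description precedes it below -/
import Mathlib

section
/- An F×K array P over {*} ∪ {1,...,S} with exactly Z stars per column satisfies the PDA conditions C2a and C2b if and only if the edge coloring of the associated bipartite graph G(K,F,E) — with left vertices the K columns, right vertices the F rows, an edge (j,i) whenever p(i,j) ≠ *, colored by the integer p(i,j) — is a strong edge coloring, i.e., any two edges of the same color are neither adjacent nor both adjacent to a common third edge. -/
open scoped Classical

/-- A `(K,F,Z,S)` placement delivery array: entries are `none` (the star `*`) or
`some s` with `s ∈ {1,…,S}`; each column contains exactly `Z` stars (C1); any two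
equal integer entries lie in distinct rows and distinct columns, with stars at the
complementary positions of the corresponding `2×2` subarray (C2). -/
def IsPDA (K F Z S : ℕ) (P : Fin F → Fin K → Option ℕ) : Prop :=
  (∀ i j s, P i j = some s → s ∈ Finset.Icc 1 S) ∧
  (∀ j : Fin K, (Finset.univ.filter fun i => P i j = none).card = Z) ∧
  (∀ i₁ j₁ i₂ j₂ s, P i₁ j₁ = some s → P i₂ j₂ = some s → (i₁, j₁) ≠ (i₂, j₂) →
    i₁ ≠ i₂ ∧ j₁ ≠ j₂ ∧ P i₁ j₂ = none ∧ P i₂ j₁ = none)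

/-- Two edges (positions) of the bipartite graph of an array are adjacent iff
they share a row vertex or a column vertex. -/
def EdgeAdj {F K : ℕ} (e f : Fin F × Fin K) : Prop := e.1 = f.1 ∨ e.2 = f.2

/-- An array with Z stars per column satisfies PDA conditions C2a, C2b iff the
coloring of the associated bipartite graph (edges at non-star entries, colored
by the integer entry) is a strong edge coloring. -/
theorem pda_C2_iff_strong_edge_coloring (K F Z S : ℕ)
    (P : Fin F → Fin K → Option ℕ)
    (hrange : ∀ i j s, P i j = some s → s ∈ Finset.Icc 1 S)
    (hC1 : ∀ j : Fin K, (Finset.univ.filter fun i => P i j = none).card = Z) :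
    (∀ i₁ j₁ i₂ j₂ s, P i₁ j₁ = some s → P i₂ j₂ = some s → (i₁, j₁) ≠ (i₂, j₂) →
        i₁ ≠ i₂ ∧ j₁ ≠ j₂ ∧ P i₁ j₂ = none ∧ P i₂ j₁ = none) ↔
    (∀ e f : Fin F × Fin K, P e.1 e.2 ≠ none → P f.1 f.2 ≠ none → e ≠ f →
        P e.1 e.2 = P f.1 f.2 →
        ¬ EdgeAdj e f ∧
        ¬ ∃ g : Fin F × Fin K, P g.1 g.2 ≠ none ∧ g ≠ e ∧ g ≠ f ∧
            EdgeAdj e g ∧ EdgeAdj f g) := by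
  constructor
  · intro hC2 e f he hf hef heq
    obtain ⟨s, hs⟩ := Option.ne_none_iff_exists'.mp he
    have hs' : P f.1 f.2 = some s := heq ▸ hs
    have hne : (e.1, e.2) ≠ (f.1, f.2) := by
      intro h; apply hef; exact Prod.ext (congrArg Prod.fst h) (congrArg Prod.snd h)
    obtain ⟨hr, hc, h12, h21⟩ := hC2 e.1 e.2 f.1 f.2 s hs hs' hne
    refine ⟨fun h => h.elim hr hc, ?_⟩
    rintro ⟨g, hg, hge, hgf, hadj1, hadj2⟩
    rcases hadj1 with h1 | h1
    · rcases hadj2 with h2 | h2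
      · exact hr (h1.trans h2.symm)
      · apply hg; have : g = (e.1, f.2) := Prod.ext h1.symm h2.symm
        rw [this]; exact h12
    · rcases hadj2 with h2 | h2
      · apply hg; have : g = (f.1, e.2) := Prod.ext h2.symm h1.symm
        rw [this]; exact h21
      · exact hc (h1.trans h2.symm)
  · intro hS i₁ j₁ i₂ j₂ s h1 h2 hne
    have hne' : ((i₁, j₁) : Fin F × Fin K) ≠ (i₂, j₂) := hne
    obtain ⟨hnadj, hng⟩ := hS (i₁, j₁) (i₂, j₂) (by simp [h1]) (by simp [h2]) hne'
      (by simp [h1, h2])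
    have hr : i₁ ≠ i₂ := fun h => hnadj (Or.inl h)
    have hc : j₁ ≠ j₂ := fun h => hnadj (Or.inr h)
    refine ⟨hr, hc, ?_, ?_⟩
    · by_contra hx
      exact hng ⟨(i₁, j₂), hx, by simp [Prod.ext_iff, hc.symm], by simp [Prod.ext_iff, hr],
        Or.inl rfl, Or.inr rfl⟩
    · by_contra hx
      exact hng ⟨(i₂, j₁), hx, by simp [Prod.ext_iff, hr.symm], by simp [Prod.ext_iff, hc],
        Or.inr rfl, Or.inl rfl⟩
end

section
/- If an integer s appears t times in a (K,F,Z,S) PDA, then t ≤ Z + 1. -/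
open scoped Classical

/-! Fix an occurrence of `s` in column `j₀`. By (C2) every other occurrence of `s` sits in a row
carrying a star in column `j₀`, and distinct occurrences sit in distinct rows, so the rows of the
other occurrences are distinct star rows of column `j₀`. -/

namespace PDA

variable {ι κ σ : Type*} [Fintype ι] [Fintype κ] [DecidableEq σ]

/-- Condition (C2) of `IsPDA`. -/
def StarCondition (P : ι → κ → Option σ) : Prop :=
  ∀ i₁ j₁ i₂ j₂ s, P i₁ j₁ = some s → P i₂ j₂ = some s → (i₁, j₁) ≠ (i₂, j₂) →
    i₁ ≠ i₂ ∧ j₁ ≠ j₂ ∧ P i₁ j₂ = none ∧ P i₂ j₁ = none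

def occurrences (P : ι → κ → Option σ) (s : σ) : Finset (ι × κ) :=
  Finset.univ.filter fun p => P p.1 p.2 = some s

def stars (P : ι → κ → Option σ) (j : κ) : Finset ι :=
  Finset.univ.filter fun i => P i j = none

@[simp]
theorem mem_occurrences {P : ι → κ → Option σ} {s : σ} {p : ι × κ} :
    p ∈ occurrences P s ↔ P p.1 p.2 = some s := by
  simp [occurrences]

namespace StarCondition

variable {P : ι → κ → Option σ} (hP : StarCondition P) {s : σ}
include hP

theorem injOn_fst_occurrences : Set.InjOn Prod.fst (occurrences P s : Set (ι × κ)) := by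
  rintro p hp q hq hpq
  by_contra hne
  exact (hP p.1 p.2 q.1 q.2 s (mem_occurrences.1 hp) (mem_occurrences.1 hq) hne).1 hpq

theorem fst_mem_stars {i₀ : ι} {j₀ : κ} (h₀ : P i₀ j₀ = some s) {p : ι × κ}
    (hp : p ∈ (occurrences P s).erase (i₀, j₀)) : p.1 ∈ stars P j₀ := by
  obtain ⟨hne, hp⟩ := Finset.mem_erase.1 hp
  simpa [stars] using (hP p.1 p.2 i₀ j₀ s (mem_occurrences.1 hp) h₀ hne).2.2.1

theorem card_occurrences_le_card_stars_add_one {i₀ : ι} {j₀ : κ} (h₀ : P i₀ j₀ = some s) :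
    (occurrences P s).card ≤ (stars P j₀).card + 1 := by
  have hmem : (i₀, j₀) ∈ occurrences P s := mem_occurrences.2 h₀
  have hothers : ((occurrences P s).erase (i₀, j₀)).card ≤ (stars P j₀).card :=
    Finset.card_le_card_of_injOn Prod.fst (fun p hp => hP.fst_mem_stars h₀ hp)
      (hP.injOn_fst_occurrences.mono (Finset.erase_subset _ _))
  rw [← Finset.card_erase_add_one hmem]
  omega

end StarCondition

end PDA

/-- If an integer s appears t times in a (K,F,Z,S) PDA, then t ≤ Z + 1. -/
theorem pda_integer_multiplicity_le (K F Z S : ℕ)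
    (P : Fin F → Fin K → Option ℕ) (hP : IsPDA K F Z S P) (s : ℕ) :
    (Finset.univ.filter fun p : Fin F × Fin K => P p.1 p.2 = some s).card
      ≤ Z + 1 := by
  obtain ⟨-, hcolumn, hstar⟩ := hP
  change (PDA.occurrences P s).card ≤ Z + 1
  rcases (PDA.occurrences P s).eq_empty_or_nonempty with hempty | ⟨⟨i₀, j₀⟩, h₀⟩
  · simp [hempty]
  calc (PDA.occurrences P s).card ≤ (PDA.stars P j₀).card + 1 :=
        PDA.StarCondition.card_occurrences_le_card_stars_add_one hstar
          (PDA.mem_occurrences.1 h₀)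
    _ = Z + 1 := by rw [PDA.stars, hcolumn j₀]
end

section
/- In the delivery phase induced by a (K,F,Z,S) PDA, for every user k and every row j with p(j,k) = s an integer, user k can recover the packet W(d_k, j) from the broadcast XOR ⊕_{p(j',k')=s} W(d_{k'}, j') together with its cache: every other summand W(d_{k'}, j') with (j',k') ≠ (j,k) and p(j',k') = s satisfies p(j',k) = *, hence is cached by user k. -/
open scoped Classical

/-- Decodability of the PDA delivery phase: if user k has an integer s at row
j, every other summand of the broadcast XOR for s is cached by user k (its
entry in column k is a star), and user k recovers the packet W (d k) j from
the broadcast together with its cache. -/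
theorem pda_delivery_decodable (K F Z S N : ℕ)
    (P : Fin F → Fin K → Option ℕ) (hP : IsPDA K F Z S P)
    {G : Type*} [AddCommGroup G] (W : Fin N → Fin F → G)
    (d : Fin K → Fin N) (s : ℕ) (j : Fin F) (k : Fin K)
    (hjk : P j k = some s) :
    (∀ j' k', P j' k' = some s → (j', k') ≠ (j, k) → P j' k = none) ∧
    W (d k) j =
      (∑ p ∈ Finset.univ.filter
          (fun p : Fin F × Fin K => P p.1 p.2 = some s), W (d p.2) p.1) -
      ∑ p ∈ (Finset.univ.filter
          (fun p : Fin F × Fin K => P p.1 p.2 = some s)).erase (j, k),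
        W (d p.2) p.1 := by
  obtain ⟨-, -, hC2⟩ := hP
  constructor
  · intro j' k' h hne
    exact (hC2 j' k' j k s h hjk (by simpa using hne)).2.2.1
  · have hmem : (j, k) ∈ Finset.univ.filter
        (fun p : Fin F × Fin K => P p.1 p.2 = some s) := by simp [hjk]
    rw [← Finset.add_sum_erase _ _ hmem]
    abel
end
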